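/- Let j ≥ 2 and let Q_1 = (q_{1,n}), Q_2 = (q_{2,n}), …, Q_j = (q_{j,n}) be basic sequences, each infinite in limit. Suppose x = E_0.E_1E_2… w.r.t. Q_1 satisfies E_n < min_{2 ≤ r ≤ j}(q_{r,n} − 1) for infinitely many n. Then for every block B of nonnegative integers there is a constant C such that for all n, |N_n^{Q_j}(B, (ψ_{Q_{j−1},Q_j} ∘ ψ_{Q_{j−2},Q_{j−1}} ∘ ⋯ ∘ ψ_{Q_1,Q_2})(x)) − N_n^{Q_1}(B, x)| ≤ C. -/

import Mathlib

/-!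
If `E` are the `P`-digits of `y`, then `ψ_{P,Q}(y)` is the `Q`-series with digits
`min(E_n, q_n - 1)`; when these are infinitely often non-maximal this series is the `Q`-expansion
of `ψ_{P,Q}(y)`, by uniqueness of expansions (the remainders `r_n = T_{Q,n-1}` lie in `[0,1)` and
`E_n = ⌊q_n r_n⌋`). The hypothesis on `x` keeps every stage non-maximal, so the `Q_j`-digits of the
composite are the `E_n` truncated successively at `q_{2,n} - 1, …, q_{j,n} - 1`. Since `q_{r,n} → ∞`,
beyond some `N` all truncation levels exceed every entry of `B`, so `B` occurs at a position
`≥ N` in one digit sequence iff it does in the other, and the two counts differ by at most `N`.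
-/

open Filter Finset MeasureTheory

noncomputable section
open scoped Classical

/-- `cantorProd q n = q 1 * q 2 * ... * q n` (empty product for `n = 0`). -/
def cantorProd (q : ℕ → ℕ) (n : ℕ) : ℕ := ∏ j ∈ Finset.Icc 1 n, q j

/-- `T_{Q,n}(x) = q_1 q_2 ⋯ q_n · x (mod 1)`. -/
def TQ (q : ℕ → ℕ) (n : ℕ) (x : ℝ) : ℝ := Int.fract ((cantorProd q n : ℝ) * x)

/-- A basic sequence: `q n ≥ 2` for all `n ≥ 1`. -/
def BasicSeq (q : ℕ → ℕ) : Prop := ∀ n, 1 ≤ n → 2 ≤ q n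

/-- `Q` is infinite in limit: `q n → ∞`. -/
def InfiniteInLimit (q : ℕ → ℕ) : Prop := Filter.Tendsto q Filter.atTop Filter.atTop

/-- `E` (indexed from 1) is the sequence of digits of the `Q`-Cantor series expansion of `x`:
`E n ∈ {0, …, q n − 1}`, `E n ≠ q n − 1` infinitely often, and
`x = ⌊x⌋ + ∑_{n ≥ 1} E n / (q 1 ⋯ q n)`. -/
def IsCantorDigits (q : ℕ → ℕ) (E : ℕ → ℕ) (x : ℝ) : Prop :=
  (∀ n, 1 ≤ n → E n < q n) ∧
  {n | 1 ≤ n ∧ E n ≠ q n - 1}.Infinite ∧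
  x = (⌊x⌋ : ℝ) + ∑' n : ℕ, (E (n + 1) : ℝ) / (cantorProd q (n + 1) : ℝ)

/-- `Q_n^{(k)} = ∑_{j=1}^n 1/(q_j q_{j+1} ⋯ q_{j+k-1})`. -/
def Qnk (q : ℕ → ℕ) (k n : ℕ) : ℝ :=
  ∑ j ∈ Finset.Icc 1 n, 1 / ∏ i ∈ Finset.Ico j (j + k), (q i : ℝ)

/-- `Q` is `k`-divergent. -/
def KDivergent (q : ℕ → ℕ) (k : ℕ) : Prop :=
  Filter.Tendsto (fun n => Qnk q k n) Filter.atTop Filter.atTop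

/-- `N_n^Q(B, x)`: the number of indices `1 ≤ i ≤ n - |B| + 1` at which the block `B`
occurs in the digit sequence `E`. -/
def blockCount (E : ℕ → ℕ) (B : List ℕ) (n : ℕ) : ℕ :=
  ((Finset.Icc 1 (n + 1 - B.length)).filter
    (fun i => ∀ t, t < B.length → E (i + t) = B.getD t 0)).card

/-- The digit sequence `E` is `Q`-normal of order `k`. -/
def QNormalOfOrder (q : ℕ → ℕ) (E : ℕ → ℕ) (k : ℕ) : Prop :=
  ∀ B : List ℕ, B.length = k →
    Filter.Tendsto (fun n => (blockCount E B n : ℝ) / Qnk q k n) Filter.atTop (nhds 1)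

/-- A sequence (indexed from 0) is uniformly distributed mod 1. -/
def UDMod1 (z : ℕ → ℝ) : Prop :=
  ∀ a b : ℝ, 0 ≤ a → a < b → b ≤ 1 →
    Filter.Tendsto
      (fun N => (((Finset.range N).filter (fun n => Int.fract (z n) ∈ Set.Ico a b)).card : ℝ) / N)
      Filter.atTop (nhds (b - a))

/-- `x` is `Q`-distribution normal: `(T_{Q,n}(x))_{n ≥ 0}` is uniformly distributed mod 1. -/
def QDistNormal (q : ℕ → ℕ) (x : ℝ) : Prop := UDMod1 (fun n => TQ q n x)

/-- A set of natural numbers has (natural) density zero. -/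
def DensityZero (A : Set ℕ) : Prop :=
  Filter.Tendsto (fun N => (((Finset.Icc 1 N).filter (fun n => n ∈ A)).card : ℝ) / N)
    Filter.atTop (nhds 0)

/-- The `n`-th digit (for `n ≥ 1`) of the `Q`-Cantor series expansion of `x`,
extracted via `E_n = ⌊q_n · T_{Q,n-1}(x)⌋`. -/
def cantorDigit (q : ℕ → ℕ) (x : ℝ) (n : ℕ) : ℤ := ⌊(q n : ℝ) * TQ q (n - 1) x⌋

/-- `ψ_{P,Q}(x) = ∑_{n ≥ 1} min(E_n, q_n − 1)/(q_1 ⋯ q_n)`, where `E` are the `P`-digits of `x`. -/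
def psiMap (p q : ℕ → ℕ) (x : ℝ) : ℝ :=
  ∑' n : ℕ, ((min (cantorDigit p x (n + 1)) ((q (n + 1) : ℤ) - 1) : ℤ) : ℝ) /
    (cantorProd q (n + 1) : ℝ)

/-- `N_n^Q(B, x)` defined via the canonical digits of the real number `x`. -/
def blockCountReal (q : ℕ → ℕ) (x : ℝ) (B : List ℕ) (n : ℕ) : ℕ :=
  ((Finset.Icc 1 (n + 1 - B.length)).filter
    (fun i => ∀ t, t < B.length → cantorDigit q x (i + t) = (B.getD t 0 : ℤ))).card

/-- The real number `x` is `Q`-normal of order `k`. -/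
def QNormalOfOrderReal (q : ℕ → ℕ) (x : ℝ) (k : ℕ) : Prop :=
  ∀ B : List ℕ, B.length = k →
    Filter.Tendsto (fun n => (blockCountReal q x B n : ℝ) / Qnk q k n) Filter.atTop (nhds 1)

/-- The discrepancy `D_N` of the finite sequence `x 1, …, x N` (of numbers in `[0,1)`). -/
def discrepancy (N : ℕ) (x : ℕ → ℝ) : ℝ :=
  sSup {d : ℝ | ∃ a b : ℝ, 0 ≤ a ∧ a ≤ b ∧ b ≤ 1 ∧
    d = |(((Finset.Icc 1 N).filter (fun n => x n ∈ Set.Ico a b)).card : ℝ) / N - (b - a)|}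

/-- The remainder `r_n = ∑_{m ≥ 0} E_{n+m} / (q_n ⋯ q_{n+m})`; it equals `T_{Q,n-1}(x)`. -/
def tailSum (q E : ℕ → ℕ) (n : ℕ) : ℝ :=
  ∑' m : ℕ, (E (n + m) : ℝ) / ∏ i ∈ Ico n (n + m + 1), (q i : ℝ)

variable {q E : ℕ → ℕ} {n : ℕ}

lemma BasicSeq.cast_pos (hq : BasicSeq q) {i : ℕ} (hi : 1 ≤ i) : (0 : ℝ) < q i := by
  have := hq i hi
  exact_mod_cast (by omega : 0 < q i)

lemma BasicSeq.prod_Ico_pos (hq : BasicSeq q) (hn : 1 ≤ n) (k : ℕ) :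
    0 < ∏ i ∈ Ico n k, (q i : ℝ) :=
  prod_pos fun _ hi => hq.cast_pos (hn.trans (mem_Ico.mp hi).1)

lemma BasicSeq.sum_range_maxDigit_div (hq : BasicSeq q) (hn : 1 ≤ n) (K : ℕ) :
    ∑ m ∈ range K, ((q (n + m) : ℝ) - 1) / ∏ i ∈ Ico n (n + m + 1), (q i : ℝ) =
      1 - 1 / ∏ i ∈ Ico n (n + K), (q i : ℝ) := by
  induction K with
  | zero => simp
  | succ K ih =>
    have hP := hq.prod_Ico_pos hn (n + K)
    have hq := hq.cast_pos (by omega : 1 ≤ n + K)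
    rw [sum_range_succ, ih, ← add_assoc, prod_Ico_succ_top (by omega)]
    field_simp
    ring

lemma BasicSeq.maxDigit_div_nonneg (hq : BasicSeq q) (hn : 1 ≤ n) (m : ℕ) :
    0 ≤ ((q (n + m) : ℝ) - 1) / ∏ i ∈ Ico n (n + m + 1), (q i : ℝ) := by
  have := hq (n + m) (by omega)
  have : (1 : ℝ) ≤ q (n + m) := by exact_mod_cast (by omega : 1 ≤ q (n + m))
  exact div_nonneg (by linarith) (hq.prod_Ico_pos hn _).le

lemma BasicSeq.sum_range_maxDigit_div_le_one (hq : BasicSeq q) (hn : 1 ≤ n) (K : ℕ) :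
    ∑ m ∈ range K, ((q (n + m) : ℝ) - 1) / ∏ i ∈ Ico n (n + m + 1), (q i : ℝ) ≤ 1 := by
  rw [hq.sum_range_maxDigit_div hn]
  have := hq.prod_Ico_pos hn (n + K)
  have : 0 < 1 / ∏ i ∈ Ico n (n + K), (q i : ℝ) := by positivity
  linarith

lemma BasicSeq.summable_maxDigit_div (hq : BasicSeq q) (hn : 1 ≤ n) :
    Summable fun m => ((q (n + m) : ℝ) - 1) / ∏ i ∈ Ico n (n + m + 1), (q i : ℝ) :=
  summable_of_sum_range_le (hq.maxDigit_div_nonneg hn) (hq.sum_range_maxDigit_div_le_one hn)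

lemma BasicSeq.tsum_maxDigit_div_le_one (hq : BasicSeq q) (hn : 1 ≤ n) :
    ∑' m, ((q (n + m) : ℝ) - 1) / ∏ i ∈ Ico n (n + m + 1), (q i : ℝ) ≤ 1 :=
  Real.tsum_le_of_sum_range_le (hq.maxDigit_div_nonneg hn) (hq.sum_range_maxDigit_div_le_one hn)

lemma digit_div_le (hE : ∀ i, 1 ≤ i → E i < q i) (hn : 1 ≤ n) (m : ℕ) :
    (E (n + m) : ℝ) / ∏ i ∈ Ico n (n + m + 1), (q i : ℝ) ≤
      ((q (n + m) : ℝ) - 1) / ∏ i ∈ Ico n (n + m + 1), (q i : ℝ) := by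
  gcongr
  have := hE (n + m) (by omega)
  exact le_sub_iff_add_le.mpr (by exact_mod_cast this)

lemma summable_tailSum (hq : BasicSeq q) (hE : ∀ i, 1 ≤ i → E i < q i) (hn : 1 ≤ n) :
    Summable fun m => (E (n + m) : ℝ) / ∏ i ∈ Ico n (n + m + 1), (q i : ℝ) :=
  (hq.summable_maxDigit_div hn).of_nonneg_of_le
    (fun _ => div_nonneg (Nat.cast_nonneg _) (hq.prod_Ico_pos hn _).le) (digit_div_le hE hn)

lemma tailSum_nonneg : 0 ≤ tailSum q E n :=
  tsum_nonneg fun _ => by positivity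

/-- The remainder is `< 1` because some later digit is not maximal. -/
lemma tailSum_lt_one (hq : BasicSeq q) (hE : ∀ i, 1 ≤ i → E i < q i)
    (hinf : {i | 1 ≤ i ∧ E i ≠ q i - 1}.Infinite) (hn : 1 ≤ n) :
    tailSum q E n < 1 := by
  obtain ⟨k, ⟨hk1, hkmax⟩, hnk⟩ := hinf.exists_gt n
  obtain ⟨m, rfl⟩ : ∃ m, k = n + (m + 1) := ⟨k - n - 1, by omega⟩
  have hsmall : (E (n + (m + 1)) : ℝ) + 1 < q (n + (m + 1)) := by
    have := hE _ hk1
    exact_mod_cast (by omega : E (n + (m + 1)) + 1 < q (n + (m + 1)))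
  calc tailSum q E n
      < ∑' m, ((q (n + m) : ℝ) - 1) / ∏ i ∈ Ico n (n + m + 1), (q i : ℝ) :=
        Summable.tsum_lt_tsum (i := m + 1) (digit_div_le hE hn)
          (by gcongr; exacts [hq.prod_Ico_pos hn _, by linarith])
          (summable_tailSum hq hE hn) (hq.summable_maxDigit_div hn)
    _ ≤ 1 := hq.tsum_maxDigit_div_le_one hn

lemma mul_tailSum (hq : BasicSeq q) (hE : ∀ i, 1 ≤ i → E i < q i) (hn : 1 ≤ n) :
    (q n : ℝ) * tailSum q E n = E n + tailSum q E (n + 1) := by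
  have hqn := (hq.cast_pos hn).ne'
  have hshift (m : ℕ) :
      (E (n + (m + 1)) : ℝ) / ∏ i ∈ Ico n (n + (m + 1) + 1), (q i : ℝ) =
        (E (n + 1 + m) : ℝ) / (∏ i ∈ Ico (n + 1) (n + 1 + m + 1), (q i : ℝ)) / q n := by
    rw [show n + (m + 1) = n + 1 + m by omega,
      prod_eq_prod_Ico_succ_bot (by omega : n < n + 1 + m + 1)]
    ring
  rw [tailSum, (summable_tailSum hq hE hn).tsum_eq_zero_add, tsum_congr hshift]
  simp only [tsum_div_const, add_zero, Ico_add_one_right_eq_Icc, Icc_self, prod_singleton]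
  field_simp
  rfl

lemma tsum_div_cantorProd_eq_tailSum :
    ∑' m : ℕ, (E (m + 1) : ℝ) / (cantorProd q (m + 1) : ℝ) = tailSum q E 1 := by
  refine tsum_congr fun m => ?_
  rw [cantorProd, ← Ico_add_one_right_eq_Icc, add_comm 1 m]
  push_cast
  rfl

lemma fract_tailSum (hq : BasicSeq q) (hE : ∀ i, 1 ≤ i → E i < q i)
    (hinf : {i | 1 ≤ i ∧ E i ≠ q i - 1}.Infinite) (hn : 1 ≤ n) :
    Int.fract (tailSum q E n) = tailSum q E n :=
  Int.fract_eq_self.mpr ⟨tailSum_nonneg, tailSum_lt_one hq hE hinf hn⟩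

lemma cantorProd_succ (q : ℕ → ℕ) (n : ℕ) :
    cantorProd q (n + 1) = cantorProd q n * q (n + 1) :=
  prod_Icc_succ_top (by omega) q

lemma IsCantorDigits.TQ_eq_tailSum {x : ℝ} (hx : IsCantorDigits q E x) (hq : BasicSeq q)
    (n : ℕ) : TQ q n x = tailSum q E (n + 1) := by
  obtain ⟨hE, hinf, hxeq⟩ := hx
  induction n with
  | zero =>
    rw [TQ, cantorProd, Icc_eq_empty (by omega), prod_empty, Nat.cast_one, one_mul, hxeq,
      tsum_div_cantorProd_eq_tailSum, Int.fract_intCast_add, fract_tailSum hq hE hinf le_rfl]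
  | succ n ih =>
    have hsplit := Int.floor_add_fract ((cantorProd q n : ℝ) * x)
    rw [← TQ, ih] at hsplit
    have hrec := mul_tailSum hq hE (by omega : 1 ≤ n + 1)
    have hP : (cantorProd q (n + 1) : ℝ) * x =
        (((q (n + 1) : ℤ) * ⌊(cantorProd q n : ℝ) * x⌋ + E (n + 1) : ℤ) : ℝ) +
          tailSum q E (n + 1 + 1) := by
      rw [cantorProd_succ]
      push_cast
      linear_combination (q (n + 1) : ℝ) * hsplit.symm + hrec
    rw [TQ, hP, Int.fract_intCast_add, fract_tailSum hq hE hinf (by omega)]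

lemma IsCantorDigits.cantorDigit_eq {x : ℝ} (hx : IsCantorDigits q E x) (hq : BasicSeq q)
    (hn : 1 ≤ n) : cantorDigit q x n = E n := by
  have hT : TQ q (n - 1) x = tailSum q E n := by
    rw [hx.TQ_eq_tailSum hq, Nat.sub_add_cancel hn]
  rw [cantorDigit, hT, mul_tailSum hq hx.1 hn, ← Int.cast_natCast (E n), Int.floor_intCast_add,
    Int.floor_eq_zero_iff.mpr ⟨tailSum_nonneg, tailSum_lt_one hq hx.1 hx.2.1 (by omega)⟩,
    add_zero]

lemma isCantorDigits_tsum (hq : BasicSeq q) (hE : ∀ i, 1 ≤ i → E i < q i)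
    (hinf : {i | 1 ≤ i ∧ E i ≠ q i - 1}.Infinite) :
    IsCantorDigits q E (∑' m : ℕ, (E (m + 1) : ℝ) / (cantorProd q (m + 1) : ℝ)) := by
  refine ⟨hE, hinf, ?_⟩
  rw [tsum_div_cantorProd_eq_tailSum,
    Int.floor_eq_zero_iff.mpr ⟨tailSum_nonneg, tailSum_lt_one hq hE hinf le_rfl⟩,
    Int.cast_zero, zero_add]

lemma IsCantorDigits.psiMap {p F : ℕ → ℕ} {y : ℝ} (hy : IsCantorDigits p F y)
    (hp : BasicSeq p) (hq : BasicSeq q) (hinf : {n | 1 ≤ n ∧ F n < q n - 1}.Infinite) :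
    IsCantorDigits q (fun n => min (F n) (q n - 1)) (psiMap p q y) := by
  have hdigits : ∀ n, 1 ≤ n → min (F n) (q n - 1) < q n := fun n hn => by
    have := hq n hn
    omega
  have hnonmax : {n | 1 ≤ n ∧ min (F n) (q n - 1) ≠ q n - 1}.Infinite :=
    hinf.mono <| by
      rintro n ⟨hn, hlt⟩
      exact ⟨hn, by omega⟩
  convert isCantorDigits_tsum hq hdigits hnonmax using 1
  refine tsum_congr fun m => ?_
  have hq1 := hq (m + 1) (by omega)
  rw [hy.cantorDigit_eq hp (by omega), ← Nat.cast_pred (by omega), ← Nat.cast_min,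
    Int.cast_natCast]

lemma blockCountReal_eq_blockCount {y : ℝ} {F : ℕ → ℕ}
    (h : ∀ i, 1 ≤ i → cantorDigit q y i = F i) (B : List ℕ) (n : ℕ) :
    blockCountReal q y B n = blockCount F B n := by
  unfold blockCountReal blockCount
  refine congrArg card <| filter_congr fun i hi => forall₂_congr fun t _ => ?_
  rw [h (i + t) (by have := (mem_Icc.mp hi).1; omega), Nat.cast_inj]

lemma blockCount_le_add {F : ℕ → ℕ} {B : List ℕ} {N : ℕ}
    (h : ∀ i, N ≤ i → ∀ b ∈ B, E i = b → F i = b) (n : ℕ) :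
    blockCount E B n ≤ blockCount F B n + N := by
  unfold blockCount
  set s := Icc 1 (n + 1 - B.length)
  have hsub : s.filter (fun i => ∀ t, t < B.length → E (i + t) = B.getD t 0) ⊆
      s.filter (fun i => ∀ t, t < B.length → F (i + t) = B.getD t 0) ∪ range N := by
    intro i hi
    rw [mem_filter] at hi
    by_cases hNi : N ≤ i
    · refine mem_union_left _ (mem_filter.mpr ⟨hi.1, fun t ht => ?_⟩)
      have hb : B.getD t 0 ∈ B := by
        rw [List.getD_eq_getElem B 0 ht]
        exact List.getElem_mem ht
      exact h (i + t) (by omega) _ hb (hi.2 t ht)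
    · exact mem_union_right _ (mem_range.mpr (by omega))
  calc _ ≤ _ := card_le_card hsub
    _ ≤ _ := (card_union_le _ _).trans_eq (by rw [card_range])

lemma abs_blockCount_sub_le {F : ℕ → ℕ} {B : List ℕ} {N : ℕ}
    (h : ∀ i, N ≤ i → ∀ b ∈ B, E i = b ↔ F i = b) (n : ℕ) :
    |(blockCount E B n : ℝ) - blockCount F B n| ≤ N := by
  have hEF : (blockCount E B n : ℝ) ≤ blockCount F B n + N := by
    exact_mod_cast blockCount_le_add (fun i hi b hb => (h i hi b hb).mp) n
  have hFE : (blockCount F B n : ℝ) ≤ blockCount E B n + N := by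
    exact_mod_cast blockCount_le_add (fun i hi b hb => (h i hi b hb).mpr) n
  rw [abs_sub_le_iff]
  constructor <;> linarith

/-- `psiIter Q x r = (ψ_{Q_r,Q_{r+1}} ∘ ⋯ ∘ ψ_{Q_1,Q_2})(x)`. -/
def psiIter (Q : ℕ → ℕ → ℕ) (x : ℝ) (r : ℕ) : ℝ :=
  Nat.rec (motive := fun _ => ℝ) x (fun r y => psiMap (Q (r + 1)) (Q (r + 2)) y) r

/-- The digits of `psiIter Q x r` when `E` are the `Q 1`-digits of `x`. -/
def truncDigits (Q : ℕ → ℕ → ℕ) (E : ℕ → ℕ) : ℕ → ℕ → ℕ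
  | 0 => E
  | r + 1 => fun n => min (truncDigits Q E r n) (Q (r + 2) n - 1)

variable {Q : ℕ → ℕ → ℕ} {j : ℕ}

lemma truncDigits_le (r n : ℕ) : truncDigits Q E r n ≤ E n := by
  induction r with
  | zero => exact le_rfl
  | succ r ih => exact (min_le_left _ _).trans ih

lemma isCantorDigits_psiIter {x : ℝ} (hQ : ∀ r, 1 ≤ r → r ≤ j → BasicSeq (Q r))
    (hE : IsCantorDigits (Q 1) E x)
    (hsmall : {n | 1 ≤ n ∧ ∀ r, 2 ≤ r → r ≤ j → E n < Q r n - 1}.Infinite)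
    {r : ℕ} (hr : r + 1 ≤ j) :
    IsCantorDigits (Q (r + 1)) (truncDigits Q E r) (psiIter Q x r) := by
  induction r with
  | zero => exact hE
  | succ r ih =>
    refine (ih (by omega)).psiMap (hQ _ (by omega) (by omega)) (hQ _ (by omega) hr) ?_
    refine hsmall.mono ?_
    rintro n ⟨hn, hlt⟩
    exact ⟨hn, (truncDigits_le r n).trans_lt (hlt (r + 2) (by omega) hr)⟩

lemma min_truncDigits_eq {n M : ℕ} (hbig : ∀ s, 2 ≤ s → s ≤ j → M < Q s n - 1)
    {r : ℕ} (hr : r + 1 ≤ j) : min (truncDigits Q E r n) (M + 1) = min (E n) (M + 1) := by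
  induction r with
  | zero => rfl
  | succ r ih =>
    have hle : M + 1 ≤ Q (r + 2) n - 1 := hbig (r + 2) (by omega) hr
    rw [truncDigits, min_assoc, min_eq_right hle, ih (by omega)]

/-- block-counting theorem for iterated `ψ` maps. Here `Q 1, …, Q j` are the
basic sequences and the iterated composition
`ψ_{Q_{j-1},Q_j} ∘ ⋯ ∘ ψ_{Q_1,Q_2}` applied to `x` is expressed by primitive recursion. -/
theorem stmt_15 (j : ℕ) (hj : 2 ≤ j) (Q : ℕ → ℕ → ℕ)
    (hQ : ∀ r, 1 ≤ r → r ≤ j → BasicSeq (Q r))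
    (hQinf : ∀ r, 1 ≤ r → r ≤ j → InfiniteInLimit (Q r))
    (x : ℝ) (E : ℕ → ℕ) (hE : IsCantorDigits (Q 1) E x)
    (hsmall : {n | 1 ≤ n ∧ ∀ r, 2 ≤ r → r ≤ j → E n < Q r n - 1}.Infinite) :
    ∀ B : List ℕ, ∃ C : ℝ, ∀ n : ℕ,
      |(blockCountReal (Q j)
          (Nat.rec (motive := fun _ => ℝ) x
            (fun r yr => psiMap (Q (r + 1)) (Q (r + 2)) yr) (j - 1)) B n : ℝ) -
        (blockCount E B n : ℝ)| ≤ C := by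
  intro B
  have hdigits := isCantorDigits_psiIter hQ hE hsmall (r := j - 1) (by omega)
  rw [Nat.sub_add_cancel (by omega : 1 ≤ j)] at hdigits
  obtain ⟨N, hN⟩ := eventually_atTop.mp <| (eventually_all_finset (Icc 2 j)).mpr fun s hs =>
    Tendsto.eventually_gt_atTop (hQinf s (by grind) (mem_Icc.mp hs).2) (B.sum + 1)
  refine ⟨N, fun n => ?_⟩
  change |(blockCountReal (Q j) (psiIter Q x (j - 1)) B n : ℝ) - _| ≤ N
  rw [blockCountReal_eq_blockCount fun i hi => hdigits.cantorDigit_eq (hQ j (by omega) le_rfl) hi,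
    abs_sub_comm]
  refine abs_blockCount_sub_le (fun i hi b hb => ?_) n
  have htrunc := min_truncDigits_eq (Q := Q) (E := E) (r := j - 1) (n := i) (M := B.sum)
    (fun s h2 hs => by have := hN i hi s (mem_Icc.mpr ⟨h2, hs⟩); omega) (by omega)
  have := List.le_sum_of_mem hb
  omega
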